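/- Let ε > 0, η > 1, μ > 0, ν > 0, l > 0 and δ ≥ 0, and set k_m = exp(−δ²/(2l²)). Let m ∈ ℝ and V > 0 satisfy |m| ≤ k_m·μ, V > 1 − k_m²·ν, k_m²·ν < 1, and Φ(−(|m| + ε)/√V) = Φ(−ηε). Then δ < β·l, where β = √(2·log((μ² + η²ε²ν)/(ηε·√(μ² + (η² − 1)ε²ν) − εμ))). (This is Theorems 3 and 4 of the paper: the distance δ between an optimal query and its nearest labeled sample satisfies δ < βl, in particular during the exploration stage δ < δ_explore = βl.) -/

import Mathlib

/-- The cumulative distribution function of the standard Gaussian distribution `N(0,1)`. -/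
noncomputable def stdGaussianCDF : ℝ → ℝ :=
  fun x => ProbabilityTheory.cdf (ProbabilityTheory.gaussianReal 0 1) x

/-!
Since `Φ` is injective, the query condition says `|m| + ε = ηε√V`. Squaring it and inserting
the posterior bounds `|m| ≤ kμ` and `V > 1 − k²ν` gives the quadratic inequality
`(μ² + η²ε²ν)k² + 2εμk − (η² − 1)ε² > 0` for the kernel value `k = exp(−δ²/(2l²)) > 0`, so `k`
exceeds the positive root `(ηε√(μ² + (η² − 1)ε²ν) − εμ)/(μ² + η²ε²ν)`; taking logarithms
bounds `δ`.
-/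

open MeasureTheory ProbabilityTheory

theorem ProbabilityTheory.strictMono_cdf_of_absolutelyContinuous (μ : Measure ℝ)
    [IsProbabilityMeasure μ] (h : volume ≪ μ) : StrictMono (cdf μ) := by
  intro a b hab
  have hIoc : μ (Set.Ioc a b) ≠ 0 := fun h0 =>
    (by simpa [Real.volume_Ioc] using h h0 : b ≤ a).not_gt hab
  rwa [← measure_cdf μ, StieltjesFunction.measure_Ioc, ne_eq, ENNReal.ofReal_eq_zero,
    not_le, sub_pos] at hIoc

theorem stdGaussianCDF_strictMono : StrictMono stdGaussianCDF :=
  strictMono_cdf_of_absolutelyContinuous (gaussianReal 0 1)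
    (gaussianReal_absolutelyContinuous' 0 one_ne_zero)

theorem sub_div_lt_of_quadratic_pos {a b c d x : ℝ} (ha : 0 < a) (hb : 0 ≤ b) (hx : 0 ≤ x)
    (hdisc : d ^ 2 = b ^ 2 + a * c) (h : 0 < a * x ^ 2 + 2 * b * x - c) :
    (d - b) / a < x := by
  rw [div_lt_iff₀ ha]
  by_contra! hle
  have hsq : (a * x + b) ^ 2 ≤ d ^ 2 := pow_le_pow_left₀ (by positivity) (by linarith) 2
  nlinarith

theorem lt_sqrt_two_mul_log_mul_of_lt_exp {δ l q : ℝ} (hl : 0 < l) (hδ : 0 ≤ δ) (hq : 0 < q)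
    (h : q < Real.exp (-δ ^ 2 / (2 * l ^ 2))) : δ < Real.sqrt (2 * Real.log q⁻¹) * l := by
  have hlog : δ ^ 2 / (2 * l ^ 2) < Real.log q⁻¹ := by
    rw [Real.log_inv, lt_neg, ← neg_div, ← Real.exp_lt_exp, Real.exp_log hq]
    exact h
  have hδ2 : δ ^ 2 < 2 * Real.log q⁻¹ * l ^ 2 := by
    rw [div_lt_iff₀ (by positivity)] at hlog
    linarith
  calc δ = Real.sqrt (δ ^ 2) := (Real.sqrt_sq hδ).symm
    _ < Real.sqrt (2 * Real.log q⁻¹ * l ^ 2) := Real.sqrt_lt_sqrt (by positivity) hδ2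
    _ = Real.sqrt (2 * Real.log q⁻¹) * l := by
      rw [Real.sqrt_mul' _ (by positivity), Real.sqrt_sq hl.le]

theorem quadratic_pos_of_posterior_bounds {ε η μ ν k m V : ℝ} (hε : 0 < ε) (hη : 0 < η)
    (hV : 0 ≤ V) (hm : |m| ≤ k * μ) (hVlb : 1 - k ^ 2 * ν < V)
    (hquery : |m| + ε = η * ε * Real.sqrt V) :
    0 < (μ ^ 2 + η ^ 2 * ε ^ 2 * ν) * k ^ 2 + 2 * (ε * μ) * k - (η ^ 2 - 1) * ε ^ 2 := by
  have hlt : (η * ε) ^ 2 * (1 - k ^ 2 * ν) < (|m| + ε) ^ 2 := by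
    rw [hquery, mul_pow _ (Real.sqrt V), Real.sq_sqrt hV]
    exact mul_lt_mul_of_pos_left hVlb (by positivity)
  have hle : (|m| + ε) ^ 2 ≤ (k * μ + ε) ^ 2 :=
    pow_le_pow_left₀ (by positivity) (by linarith) 2
  nlinarith

theorem query_distance_bound_general
    (ε η μ ν l δ m V : ℝ)
    (hε : 0 < ε) (hη : 1 < η) (hμ : 0 < μ) (hν : 0 < ν) (hl : 0 < l) (hδ : 0 ≤ δ)
    (hV : 0 < V)
    (hm : |m| ≤ Real.exp (-δ ^ 2 / (2 * l ^ 2)) * μ)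
    (hVlb : 1 - (Real.exp (-δ ^ 2 / (2 * l ^ 2))) ^ 2 * ν < V)
    (hΦ : stdGaussianCDF (-(|m| + ε) / Real.sqrt V) = stdGaussianCDF (-(η * ε))) :
    δ < Real.sqrt (2 * Real.log ((μ ^ 2 + η ^ 2 * ε ^ 2 * ν) /
      (η * ε * Real.sqrt (μ ^ 2 + (η ^ 2 - 1) * ε ^ 2 * ν) - ε * μ))) * l := by
  set k := Real.exp (-δ ^ 2 / (2 * l ^ 2))
  set A := μ ^ 2 + η ^ 2 * ε ^ 2 * ν
  set S := μ ^ 2 + (η ^ 2 - 1) * ε ^ 2 * ν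
  have hη2 : 0 < η ^ 2 - 1 := by nlinarith
  have hA : 0 < A := by positivity
  have hS : 0 < S := add_pos (pow_pos hμ 2) (mul_pos (mul_pos hη2 (pow_pos hε 2)) hν)
  have hquery : |m| + ε = η * ε * Real.sqrt V := by
    have := stdGaussianCDF_strictMono.injective hΦ
    rw [div_eq_iff (Real.sqrt_pos.mpr hV).ne'] at this
    linarith
  have hdisc : (η * ε * Real.sqrt S) ^ 2 = (ε * μ) ^ 2 + A * ((η ^ 2 - 1) * ε ^ 2) := by
    rw [mul_pow, Real.sq_sqrt hS.le]
    ring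
  have hD : 0 < η * ε * Real.sqrt S - ε * μ := by
    have hsq : (ε * μ) ^ 2 < (η * ε * Real.sqrt S) ^ 2 := by
      rw [hdisc]
      exact lt_add_of_pos_right _ (mul_pos hA (mul_pos hη2 (pow_pos hε 2)))
    exact sub_pos.mpr ((le_abs_self _).trans_lt (abs_lt_of_sq_lt_sq hsq (by positivity)))
  have hk : (η * ε * Real.sqrt S - ε * μ) / A < k :=
    sub_div_lt_of_quadratic_pos hA (by positivity) (by positivity)
      hdisc (quadratic_pos_of_posterior_bounds hε (by linarith) hV.le hm hVlb hquery)
  simpa only [inv_div] using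
    lt_sqrt_two_mul_log_mul_of_lt_exp hl hδ (div_pos hD hA) hk

/-- Theorems 3 and 4 of the paper: with `k_m = exp(−δ²/(2l²))`, if the posterior mean `m`
and variance `V` at the optimal query satisfy `|m| ≤ k_m·μ`, `V > 1 − k_m²·ν`,
`k_m²·ν < 1`, and `Φ(−(|m| + ε)/√V) = Φ(−ηε)`, then the distance `δ` between the optimal
query and its nearest labeled sample satisfies `δ < β·l`, where
`β = √(2·log((μ² + η²ε²ν)/(ηε·√(μ² + (η² − 1)ε²ν) − εμ)))`. -/
theorem query_distance_bound
    (ε η μ ν l δ m V : ℝ)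
    (hε : 0 < ε) (hη : 1 < η) (hμ : 0 < μ) (hν : 0 < ν) (hl : 0 < l) (hδ : 0 ≤ δ)
    (hV : 0 < V)
    (hm : |m| ≤ Real.exp (-δ ^ 2 / (2 * l ^ 2)) * μ)
    (hVlb : 1 - (Real.exp (-δ ^ 2 / (2 * l ^ 2))) ^ 2 * ν < V)
    (hkν : (Real.exp (-δ ^ 2 / (2 * l ^ 2))) ^ 2 * ν < 1)
    (hΦ : stdGaussianCDF (-(|m| + ε) / Real.sqrt V) = stdGaussianCDF (-(η * ε))) :
    δ < Real.sqrt (2 * Real.log ((μ ^ 2 + η ^ 2 * ε ^ 2 * ν) /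
      (η * ε * Real.sqrt (μ ^ 2 + (η ^ 2 - 1) * ε ^ 2 * ν) - ε * μ))) * l :=
  query_distance_bound_general ε η μ ν l δ m V hε hη hμ hν hl hδ hV hm hVlb hΦ
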